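/- arXiv:2303.00876 — 7 statements merged into one kernel-verified Lean document; each statement's English description precedes it below -/
import Mathlib

section
/- For every bounded complex sequence a = (a_k), the limit as n → ∞ of sup_{j∈ℕ} (1/n) Σ_{k=1}^{n} |a_{k+j-1}| exists and is bounded above by the numerical radius w(T_a) of the weighted shift T_a on ℓ². -/
open Filter Finset Topology

/-- The numerical range of the weighted forward shift `T_a` on `ℓ²`:
values `⟨T_a x, x⟩ = ∑ a_k x_k conj (x_{k+1})` over unit vectors `x ∈ ℓ²`. -/
noncomputable def numRange (a : ℕ → ℂ) : Set ℂ :=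
  {z | ∃ x : ℕ → ℂ, (∑' k, ‖x k‖ ^ 2) = (1 : ℝ) ∧
    z = ∑' k, a k * x k * (starRingEnd ℂ) (x (k + 1))}

/-- The numerical radius `w(T_a)` of the weighted forward shift. -/
noncomputable def numRad (a : ℕ → ℂ) : ℝ := sSup ((fun z : ℂ => ‖z‖) '' numRange a)

/-- `a ∈ ℓ^∞`. -/
def IsBddSeq (a : ℕ → ℂ) : Prop := ∃ C : ℝ, ∀ k, ‖a k‖ ≤ C

/-- The uniform norm `‖a‖_∞`. -/
noncomputable def supNorm (a : ℕ → ℂ) : ℝ := ⨆ k, ‖a k‖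

/-- `sup_{j ∈ ℕ} (1/n) ∑_{k=1}^n |a_{k+j-1}|` (0-based indexing). -/
noncomputable def avgSup (a : ℕ → ℂ) (n : ℕ) : ℝ :=
  ⨆ j : ℕ, (∑ k ∈ Finset.range n, ‖a (k + j)‖) / n

/-- `sup_{j ∈ ℕ} (∏_{k=1}^n |a_{k+j-1}|)^{1/n}` (0-based indexing). -/
noncomputable def prodSup (a : ℕ → ℂ) (n : ℕ) : ℝ :=
  ⨆ j : ℕ, (∏ k ∈ Finset.range n, ‖a (k + j)‖) ^ ((1 : ℝ) / n)

/-! ### Auxiliary material -/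

/-- Complex sign, normalized to be a unit. -/
noncomputable def csgn (z : ℂ) : ℂ := if z = 0 then 1 else z / (‖z‖ : ℂ)

lemma norm_csgn (z : ℂ) : ‖csgn z‖ = 1 := by
  unfold csgn
  split
  · simp
  · rename_i h
    rw [norm_div, Complex.norm_real, Real.norm_eq_abs, abs_of_nonneg (norm_nonneg z),
      div_self (norm_ne_zero_iff.mpr h)]

lemma mul_conj_csgn (z : ℂ) : z * (starRingEnd ℂ) (csgn z) = (‖z‖ : ℂ) := by
  unfold csgn
  split
  · rename_i h; subst h; simp
  · rename_i h
    have hz : (‖z‖ : ℂ) ≠ 0 := by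
      simp [Complex.ofReal_ne_zero, norm_ne_zero_iff, h]
    rw [map_div₀, Complex.conj_ofReal, mul_div_assoc', Complex.mul_conj', sq,
      mul_div_assoc, div_self hz, mul_one]

/-- Accumulated phases. -/
noncomputable def phs (a : ℕ → ℂ) (j : ℕ) : ℕ → ℂ
  | 0 => 1
  | i + 1 => phs a j i * csgn (a (j + i))

lemma norm_phs (a : ℕ → ℂ) (j : ℕ) : ∀ i, ‖phs a j i‖ = 1 := by
  intro i
  induction i with
  | zero => simp [phs]
  | succ i ih => rw [phs, norm_mul, ih, norm_csgn, one_mul]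

lemma iSup_div_const (f : ℕ → ℝ) (hb : BddAbove (Set.range f)) {c : ℝ} (hc : 0 < c) :
    (⨆ j, f j) / c = ⨆ j, f j / c := by
  have hb' : BddAbove (Set.range fun j => f j / c) := by
    obtain ⟨B, hB⟩ := hb
    refine ⟨B / c, ?_⟩
    rintro y ⟨j, rfl⟩
    exact div_le_div_of_nonneg_right (hB ⟨j, rfl⟩) hc.le
  apply le_antisymm
  · rw [div_le_iff₀ hc]
    apply ciSup_le
    intro j
    rw [← div_le_iff₀ hc]
    exact le_ciSup hb' j
  · apply ciSup_le
    intro j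
    exact div_le_div_of_nonneg_right (le_ciSup hb j) hc.le

/-- Any element of the numerical range has norm at most a uniform bound for `a`. -/
lemma norm_le_of_mem_numRange {a : ℕ → ℂ} {C : ℝ} (hC : ∀ k, ‖a k‖ ≤ C)
    {z : ℂ} (hz : z ∈ numRange a) : ‖z‖ ≤ C := by
  obtain ⟨x, hx1, rfl⟩ := hz
  have hC0 : 0 ≤ C := le_trans (norm_nonneg _) (hC 0)
  have hsum : Summable fun k => ‖x k‖ ^ 2 := by
    by_contra h
    rw [tsum_eq_zero_of_not_summable h] at hx1
    norm_num at hx1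
  have hsum' : Summable fun k => ‖x (k + 1)‖ ^ 2 :=
    hsum.comp_injective (add_left_injective 1)
  have hmaj : Summable fun k => (‖x k‖ ^ 2 + ‖x (k + 1)‖ ^ 2) / 2 :=
    (hsum.add hsum').div_const 2
  have hbound : ∀ k, ‖a k * x k * (starRingEnd ℂ) (x (k + 1))‖ ≤
      C * ((‖x k‖ ^ 2 + ‖x (k + 1)‖ ^ 2) / 2) := by
    intro k
    rw [norm_mul, norm_mul, RCLike.norm_conj]
    have h1 : ‖x k‖ * ‖x (k + 1)‖ ≤ (‖x k‖ ^ 2 + ‖x (k + 1)‖ ^ 2) / 2 := by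
      nlinarith [sq_nonneg (‖x k‖ - ‖x (k + 1)‖)]
    calc ‖a k‖ * ‖x k‖ * ‖x (k + 1)‖
        ≤ C * (‖x k‖ * ‖x (k + 1)‖) := by
          rw [mul_assoc]
          exact mul_le_mul_of_nonneg_right (hC k)
            (mul_nonneg (norm_nonneg _) (norm_nonneg _))
      _ ≤ C * ((‖x k‖ ^ 2 + ‖x (k + 1)‖ ^ 2) / 2) :=
          mul_le_mul_of_nonneg_left h1 hC0
  have hnormsum : Summable fun k => ‖a k * x k * (starRingEnd ℂ) (x (k + 1))‖ :=
    Summable.of_nonneg_of_le (fun k => norm_nonneg _) hbound (hmaj.mul_left C)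
  have h2 : (∑' k, ‖x (k + 1)‖ ^ 2) ≤ 1 := by
    rw [← hx1]
    exact Summable.tsum_le_tsum_of_inj (fun k => k + 1) (add_left_injective 1)
      (fun c _ => sq_nonneg _) (fun k => le_refl _) hsum' hsum
  calc ‖∑' k, a k * x k * (starRingEnd ℂ) (x (k + 1))‖
      ≤ ∑' k, ‖a k * x k * (starRingEnd ℂ) (x (k + 1))‖ :=
        norm_tsum_le_tsum_norm hnormsum
    _ ≤ ∑' k, C * ((‖x k‖ ^ 2 + ‖x (k + 1)‖ ^ 2) / 2) :=
        Summable.tsum_le_tsum hbound hnormsum (hmaj.mul_left C)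
    _ = C * ((∑' k, (‖x k‖ ^ 2 + ‖x (k + 1)‖ ^ 2)) / 2) := by
        rw [tsum_mul_left, tsum_div_const]
    _ ≤ C * ((1 + 1) / 2) := by
        rw [Summable.tsum_add hsum hsum', hx1]
        exact mul_le_mul_of_nonneg_left (by linarith) hC0
    _ = C := by ring

lemma zero_mem_image_numRange (a : ℕ → ℂ) :
    (0 : ℝ) ∈ (fun z : ℂ => ‖z‖) '' numRange a := by
  refine ⟨0, ⟨fun k => if k = 0 then 1 else 0, ?_, ?_⟩, norm_zero⟩
  · rw [tsum_eq_sum (s := {0}) (by intro b hb; simp at hb; simp [hb])]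
    simp
  · rw [tsum_eq_sum (s := ∅) (by intro b _; simp)]
    simp

/-- The key test-vector computation. -/
lemma avg_mem_image_numRange (a : ℕ → ℂ) (n j : ℕ) :
    ((∑ k ∈ Finset.range n, ‖a (k + j)‖) / (n + 1) : ℝ) ∈
      (fun z : ℂ => ‖z‖) '' numRange a := by
  set x : ℕ → ℂ := fun k =>
    if j ≤ k ∧ k ≤ j + n then phs a j (k - j) / ((Real.sqrt (n + 1) : ℝ) : ℂ) else 0 with hxdef
  have hsqrt_pos : (0 : ℝ) < Real.sqrt (n + 1) := Real.sqrt_pos.mpr (by positivity)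
  have hx_in : ∀ i, i ≤ n → x (j + i) = phs a j i / ((Real.sqrt (n + 1) : ℝ) : ℂ) := by
    intro i hi
    simp only [hxdef]
    rw [if_pos ⟨Nat.le_add_right j i, by omega⟩, Nat.add_sub_cancel_left]
  have hx_norm_sq : ∀ k, j ≤ k → k ≤ j + n → ‖x k‖ ^ 2 = 1 / (n + 1) := by
    intro k h1 h2
    simp only [hxdef]
    rw [if_pos ⟨h1, h2⟩, norm_div, norm_phs, Complex.norm_real, Real.norm_eq_abs,
      abs_of_nonneg (le_of_lt hsqrt_pos)]
    rw [div_pow, one_pow, Real.sq_sqrt (by positivity)]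
  refine ⟨((∑ k ∈ Finset.range n, ‖a (k + j)‖) / (n + 1) : ℝ), ⟨x, ?_, ?_⟩, ?_⟩
  · -- unit vector
    rw [tsum_eq_sum (s := Finset.Icc j (j + n)) (by
      intro b hb
      simp only [Finset.mem_Icc, not_and, not_le] at hb
      simp only [hxdef]
      rw [if_neg (by omega)]
      simp)]
    have hcongr : ∑ k ∈ Finset.Icc j (j + n), ‖x k‖ ^ 2 =
        ∑ _k ∈ Finset.Icc j (j + n), 1 / ((n : ℝ) + 1) :=
      Finset.sum_congr rfl fun k hk =>
        hx_norm_sq k (Finset.mem_Icc.mp hk).1 (Finset.mem_Icc.mp hk).2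
    rw [hcongr, Finset.sum_const, Nat.card_Icc]
    have hcard : (j + n + 1 - j : ℕ) = n + 1 := by omega
    rw [hcard, nsmul_eq_mul]
    field_simp
    exact Nat.cast_succ n
  · -- the inner product value
    rw [tsum_eq_sum (s := (Finset.range n).map ⟨fun i => j + i, add_right_injective j⟩) (by
      intro b hb
      simp only [Finset.mem_map, Finset.mem_range, Function.Embedding.coeFn_mk] at hb
      push_neg at hb
      have hb' : b < j ∨ j + n ≤ b := by
        by_contra h
        push_neg at h
        exact hb (b - j) (by omega) (by omega)
      rcases hb' with h | h
      · have hx0 : x b = 0 := by simp only [hxdef]; rw [if_neg (by omega)]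
        rw [hx0]; ring
      · have hx0 : x (b + 1) = 0 := by simp only [hxdef]; rw [if_neg (by omega)]
        rw [hx0]; simp)]
    rw [Finset.sum_map]
    simp only [Function.Embedding.coeFn_mk]
    have hterm : ∀ i ∈ Finset.range n,
        a (j + i) * x (j + i) * (starRingEnd ℂ) (x (j + i + 1)) =
        ((‖a (i + j)‖ : ℝ) : ℂ) / ((n : ℂ) + 1) := by
      intro i hi
      rw [Finset.mem_range] at hi
      have h1 : x (j + i) = phs a j i / ((Real.sqrt (n + 1) : ℝ) : ℂ) := hx_in i (by omega)
      have h2 : x (j + i + 1) = phs a j (i + 1) / ((Real.sqrt (n + 1) : ℝ) : ℂ) := by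
        have h2' := hx_in (i + 1) (by omega)
        rwa [← Nat.add_assoc] at h2'
      have hphs : phs a j i * (starRingEnd ℂ) (phs a j i) = 1 := by
        rw [Complex.mul_conj', norm_phs]
        norm_num
      have hsg : a (j + i) * (starRingEnd ℂ) (csgn (a (j + i))) = (‖a (j + i)‖ : ℂ) :=
        mul_conj_csgn _
      have hs2 : ((Real.sqrt (n + 1) : ℝ) : ℂ) * ((Real.sqrt (n + 1) : ℝ) : ℂ) =
          (n : ℂ) + 1 := by
        rw [← Complex.ofReal_mul, Real.mul_self_sqrt (by positivity)]
        push_cast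
        ring
      rw [h1, h2, phs, map_div₀, map_mul, Complex.conj_ofReal]
      have hre : a (j + i) * (phs a j i / ((Real.sqrt (n + 1) : ℝ) : ℂ)) *
          ((starRingEnd ℂ) (phs a j i) * (starRingEnd ℂ) (csgn (a (j + i))) /
            ((Real.sqrt (n + 1) : ℝ) : ℂ)) =
          (a (j + i) * (starRingEnd ℂ) (csgn (a (j + i)))) *
            (phs a j i * (starRingEnd ℂ) (phs a j i)) /
            (((Real.sqrt (n + 1) : ℝ) : ℂ) * ((Real.sqrt (n + 1) : ℝ) : ℂ)) := by
        ring
      rw [hre, hphs, hsg, mul_one, hs2, Nat.add_comm i j]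
    rw [Finset.sum_congr rfl hterm]
    push_cast
    rw [Finset.sum_div]
  · -- the norm
    show ‖(((∑ k ∈ Finset.range n, ‖a (k + j)‖) / (n + 1) : ℝ) : ℂ)‖ = _
    rw [Complex.norm_real, Real.norm_eq_abs, abs_of_nonneg]
    positivity

theorem stmt0 (a : ℕ → ℂ) (ha : IsBddSeq a) :
    ∃ M : ℝ, Tendsto (avgSup a) atTop (𝓝 M) ∧ M ≤ numRad a := by
  obtain ⟨C₀, hC₀⟩ := ha
  set C : ℝ := max C₀ 0 with hCdef
  have hC : ∀ k, ‖a k‖ ≤ C := fun k => le_trans (hC₀ k) (le_max_left _ _)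
  have hC0 : (0 : ℝ) ≤ C := le_max_right _ _
  set S : ℕ → ℕ → ℝ := fun n j => ∑ k ∈ Finset.range n, ‖a (k + j)‖ with hSdef
  have hS0 : ∀ n j, 0 ≤ S n j := fun n j => Finset.sum_nonneg fun k _ => norm_nonneg _
  have hSle : ∀ n j, S n j ≤ n * C := by
    intro n j
    calc S n j ≤ ∑ k ∈ Finset.range n, C := Finset.sum_le_sum fun k _ => hC _
      _ = n * C := by rw [Finset.sum_const, Finset.card_range, nsmul_eq_mul]
  have hbdd : ∀ n, BddAbove (Set.range (S n)) := by
    intro n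
    exact ⟨n * C, by rintro y ⟨j, rfl⟩; exact hSle n j⟩
  set f : ℕ → ℝ := fun n => ⨆ j, S n j with hfdef
  have hf0 : ∀ n, 0 ≤ f n := fun n => Real.iSup_nonneg fun j => hS0 n j
  -- subadditivity
  have hsub : Subadditive f := by
    intro m n
    apply ciSup_le
    intro j
    have hsplit : S (m + n) j = S m j + S n (m + j) := by
      simp only [hSdef]
      rw [Finset.sum_range_add]
      congr 1
      apply Finset.sum_congr rfl
      intro k _
      have hidx : m + k + j = k + (m + j) := by omega
      rw [hidx]
    calc S (m + n) j = S m j + S n (m + j) := hsplit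
      _ ≤ f m + f n := add_le_add (le_ciSup (hbdd m) j) (le_ciSup (hbdd n) (m + j))
  have hbelow : BddBelow (Set.range fun n : ℕ => f n / n) := by
    refine ⟨0, ?_⟩
    rintro y ⟨n, rfl⟩
    exact div_nonneg (hf0 n) (Nat.cast_nonneg n)
  have hlim := hsub.tendsto_lim hbelow
  refine ⟨hsub.lim, ?_, ?_⟩
  · -- avgSup a = fun n => f n / n
    have heq : avgSup a = fun n : ℕ => f n / n := by
      funext n
      rcases Nat.eq_zero_or_pos n with h | h
      · subst h
        simp only [avgSup, hfdef, hSdef]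
        simp
      · unfold avgSup
        rw [hfdef, iSup_div_const (S n) (hbdd n) (by exact_mod_cast h)]
    rw [heq]
    exact hlim
  · -- the bound
    have hnonneg_rad : ∀ n j, S n j / (n + 1) ≤ numRad a := by
      intro n j
      apply le_csSup
      · refine ⟨C, ?_⟩
        rintro y ⟨z, hz, rfl⟩
        exact norm_le_of_mem_numRange hC hz
      · exact avg_mem_image_numRange a n j
    have hfle : ∀ n : ℕ, f n / (n + 1) ≤ numRad a := by
      intro n
      rw [hfdef, iSup_div_const (S n) (hbdd n) (by positivity)]
      apply ciSup_le
      intro j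
      exact hnonneg_rad n j
    -- f n / (n+1) → lim
    have haux : Tendsto (fun n : ℕ => (n : ℝ) / (n + 1)) atTop (𝓝 1) := by
      have h1 : Tendsto (fun n : ℕ => 1 - 1 / ((n : ℝ) + 1)) atTop (𝓝 (1 - 0)) :=
        tendsto_const_nhds.sub tendsto_one_div_add_atTop_nhds_zero_nat
      rw [sub_zero] at h1
      apply h1.congr
      intro n
      have : ((n : ℝ) + 1) ≠ 0 := by positivity
      field_simp
      ring
    have h2 : Tendsto (fun n : ℕ => f n / n * ((n : ℝ) / (n + 1))) atTop
        (𝓝 (hsub.lim * 1)) := hlim.mul haux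
    rw [mul_one] at h2
    have h3 : Tendsto (fun n : ℕ => f n / (n + 1)) atTop (𝓝 hsub.lim) := by
      apply h2.congr'
      filter_upwards [eventually_ge_atTop 1] with n hn
      have hn' : (n : ℝ) ≠ 0 := by
        exact_mod_cast Nat.one_le_iff_ne_zero.mp hn
      field_simp
    exact le_of_tendsto h3 (Eventually.of_forall hfle)
end

section
/- For every bounded complex sequence a, the spectral radius of the weighted shift T_a is at most M(|a|) := lim_{n→∞} sup_{j∈ℕ} (1/n) Σ_{k=1}^{n} |a_{k+j-1}|, and M(|a|) is at most the numerical radius w(T_a), which in turn is at most ‖a‖_∞. -/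
open Filter Finset Topology

/-- Phase sequence making products real. -/
noncomputable def ph (a : ℕ → ℂ) : ℕ → ℂ
  | 0 => 1
  | (k+1) => if a k = 0 then 1 else a k * ph a k / ‖a k‖

lemma ph_norm (a : ℕ → ℂ) : ∀ k, ‖ph a k‖ = 1 := by
  intro k
  induction k with
  | zero => simp [ph]
  | succ k ih =>
    by_cases h : a k = 0
    · simp [ph, h]
    · simp only [ph, h, if_false]
      rw [norm_div, norm_mul, ih]
      rw [mul_one, Complex.norm_real, Real.norm_of_nonneg (norm_nonneg _),
        div_self (norm_ne_zero_iff.2 h)]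

lemma ph_key (a : ℕ → ℂ) (k : ℕ) :
    a k * ph a k * (starRingEnd ℂ) (ph a (k+1)) = (‖a k‖ : ℂ) := by
  by_cases h : a k = 0
  · simp [h]
  · have hph : ph a (k+1) = a k * ph a k / ‖a k‖ := by simp [ph, h]
    rw [hph]
    have h1 : ((‖a k‖ : ℂ)) ≠ 0 := by
      simpa using norm_ne_zero_iff.2 h
    rw [map_div₀, map_mul]
    have : (starRingEnd ℂ) ((‖a k‖ : ℂ)) = (‖a k‖ : ℂ) := Complex.conj_ofReal _
    rw [this]
    field_simp
    rw [show a k * ph a k * (starRingEnd ℂ) (a k) * (starRingEnd ℂ) (ph a k) = (a k * (starRingEnd ℂ) (a k)) * (ph a k * (starRingEnd ℂ) (ph a k)) by ring, Complex.mul_conj', Complex.mul_conj', ph_norm]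
    push_cast
    have h2 : ‖a k‖ ≠ 0 := norm_ne_zero_iff.2 h
    have h3 : (‖a k‖ : ℂ) ≠ 0 := by exact_mod_cast h2
    field_simp

lemma window_mem (a : ℕ → ℂ) (m j : ℕ) :
    (((∑ k ∈ Finset.range m, ‖a (k + j)‖) / (m + 1) : ℝ) : ℂ) ∈ numRange a := by
  set n : ℕ := m + 1 with hn
  set s : ℝ := Real.sqrt n with hsdef
  have hs0 : 0 < s := Real.sqrt_pos.2 (by positivity)
  have hs2 : s * s = n := Real.mul_self_sqrt (by positivity)
  refine ⟨fun k => if k ∈ Finset.Ico j (j + n) then ph a k / (s : ℂ) else 0, ?_, ?_⟩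
  · rw [tsum_eq_sum (s := Finset.Ico j (j + n))
      (by intro k hk; simp [hk])]
    have : ∀ k ∈ Finset.Ico j (j + n),
        ‖if k ∈ Finset.Ico j (j + n) then ph a k / (s : ℂ) else 0‖ ^ 2 = 1 / n := by
      intro k hk
      rw [if_pos hk, norm_div, ph_norm, Complex.norm_real,
        Real.norm_of_nonneg hs0.le]
      rw [one_div, one_div, ← hs2]
      rw [inv_pow, sq]
    rw [Finset.sum_congr rfl this, Finset.sum_const, Nat.card_Ico]
    have : j + n - j = n := by omega
    rw [this]
    rw [nsmul_eq_mul, mul_one_div, div_self (by rw [hn]; positivity)]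
  · rw [tsum_eq_sum (s := Finset.Ico j (j + m)) (by
      intro k hk
      simp only [Finset.mem_Ico, not_and, not_lt] at hk
      by_cases h1 : j ≤ k
      · have : ¬ (k + 1 ∈ Finset.Ico j (j + n)) := by
          simp only [Finset.mem_Ico, not_and, not_lt]
          intro _; omega
        simp [this]
      · have : ¬ (k ∈ Finset.Ico j (j + n)) := by
          simp only [Finset.mem_Ico, not_and, not_lt]; omega
        simp [this])]
    have key : ∀ k ∈ Finset.Ico j (j + m),
        a k * (if k ∈ Finset.Ico j (j + n) then ph a k / (s : ℂ) else 0) *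
          (starRingEnd ℂ) (if k + 1 ∈ Finset.Ico j (j + n) then ph a (k+1) / (s : ℂ) else 0)
          = (‖a k‖ : ℂ) / n := by
      intro k hk
      simp only [Finset.mem_Ico] at hk
      rw [if_pos (by simp only [Finset.mem_Ico]; omega),
        if_pos (by simp only [Finset.mem_Ico]; omega)]
      rw [map_div₀, Complex.conj_ofReal]
      have : a k * (ph a k / (s:ℂ)) * ((starRingEnd ℂ) (ph a (k+1)) / (s:ℂ))
          = (a k * ph a k * (starRingEnd ℂ) (ph a (k+1))) / ((s:ℂ) * (s:ℂ)) := by ring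
      rw [this, ph_key]
      have : ((s:ℂ) * (s:ℂ)) = (n : ℂ) := by
        rw [← Complex.ofReal_mul, hs2]; push_cast; ring
      rw [this]
    rw [Finset.sum_congr rfl key, ← Finset.sum_div, Finset.sum_Ico_eq_sum_range]
    have h4 : j + m - j = m := by omega
    rw [h4]
    have hsum : ∑ k ∈ Finset.range m, (‖a (j + k)‖ : ℂ)
        = ∑ k ∈ Finset.range m, (‖a (k + j)‖ : ℂ) :=
      Finset.sum_congr rfl (fun k _ => by rw [add_comm])
    rw [hsum, hn]
    push_cast
    ring

lemma numRange_norm_le (a : ℕ → ℂ) (ha : IsBddSeq a) {z : ℂ} (hz : z ∈ numRange a) :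
    ‖z‖ ≤ supNorm a := by
  obtain ⟨C, hC⟩ := ha
  have hbdd : BddAbove (Set.range fun k => ‖a k‖) := ⟨C, by rintro _ ⟨k, rfl⟩; exact hC k⟩
  have hS : ∀ k, ‖a k‖ ≤ supNorm a := fun k => le_ciSup hbdd k
  have hS0 : 0 ≤ supNorm a := le_trans (norm_nonneg _) (hS 0)
  obtain ⟨x, hx1, rfl⟩ := hz
  have h2 : Summable fun k => ‖x k‖ ^ 2 := by
    by_contra h
    rw [tsum_eq_zero_of_not_summable h] at hx1
    norm_num at hx1
  have h3 : Summable fun k => ‖x (k + 1)‖ ^ 2 := (summable_nat_add_iff (f := fun k => ‖x k‖ ^ 2) 1).2 h2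
  have ht : ∑' k, ‖x (k + 1)‖ ^ 2 ≤ 1 := by
    have := Summable.tsum_eq_zero_add h2
    rw [hx1] at this
    nlinarith [sq_nonneg ‖x 0‖]
  have ht0 : 0 ≤ ∑' k, ‖x (k + 1)‖ ^ 2 := tsum_nonneg (fun k => sq_nonneg _)
  set g : ℕ → ℝ := fun k => supNorm a * ((‖x k‖ ^ 2 + ‖x (k + 1)‖ ^ 2) / 2) with hg
  have hgsum : Summable g := ((h2.add h3).div_const 2).mul_left _
  have hfg : ∀ k, ‖a k * x k * (starRingEnd ℂ) (x (k + 1))‖ ≤ g k := by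
    intro k
    rw [norm_mul, norm_mul, RingHomIsometric.norm_map]
    have h1 : ‖a k‖ * ‖x k‖ * ‖x (k+1)‖ ≤ supNorm a * (‖x k‖ * ‖x (k+1)‖) := by
      rw [mul_assoc]
      exact mul_le_mul_of_nonneg_right (hS k) (by positivity)
    refine h1.trans ?_
    have := two_mul_le_add_sq ‖x k‖ ‖x (k+1)‖
    have hmul : ‖x k‖ * ‖x (k+1)‖ ≤ (‖x k‖ ^ 2 + ‖x (k+1)‖ ^ 2) / 2 := by nlinarith
    exact mul_le_mul_of_nonneg_left hmul hS0
  have hfs : Summable fun k => ‖a k * x k * (starRingEnd ℂ) (x (k + 1))‖ :=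
    Summable.of_nonneg_of_le (fun k => norm_nonneg _) hfg hgsum
  calc ‖∑' k, a k * x k * (starRingEnd ℂ) (x (k + 1))‖
      ≤ ∑' k, ‖a k * x k * (starRingEnd ℂ) (x (k + 1))‖ := norm_tsum_le_tsum_norm hfs
    _ ≤ ∑' k, g k := Summable.tsum_le_tsum hfg hfs hgsum
    _ ≤ supNorm a := by
        rw [hg, tsum_mul_left, tsum_div_const, Summable.tsum_add h2 h3, hx1]
        nlinarith

theorem stmt1 (a : ℕ → ℂ) (ha : IsBddSeq a) (M r : ℝ)
    (hM : Tendsto (avgSup a) atTop (𝓝 M))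
    (hr : Tendsto (prodSup a) atTop (𝓝 r)) :
    r ≤ M ∧ M ≤ numRad a ∧ numRad a ≤ supNorm a := by
  obtain ⟨C, hC⟩ := ha
  have hC' : ∀ k, ‖a k‖ ≤ max C 0 := fun k => (hC k).trans (le_max_left _ _)
  set C' : ℝ := max C 0 with hC'def
  have hC'0 : 0 ≤ C' := le_max_right _ _
  have hbdd : BddAbove (Set.range fun k => ‖a k‖) := ⟨C', by rintro _ ⟨k, rfl⟩; exact hC' k⟩
  have hS : ∀ k, ‖a k‖ ≤ supNorm a := fun k => le_ciSup hbdd k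
  have hS0 : 0 ≤ supNorm a := le_trans (norm_nonneg _) (hS 0)
  -- bound on numRange
  have hub : ∀ y ∈ (fun z : ℂ => ‖z‖) '' numRange a, y ≤ supNorm a := by
    rintro _ ⟨z, hz, rfl⟩
    exact numRange_norm_le a ⟨C, hC⟩ hz
  have hbddN : BddAbove ((fun z : ℂ => ‖z‖) '' numRange a) := ⟨supNorm a, hub⟩
  have part3 : numRad a ≤ supNorm a := Real.sSup_le hub hS0
  -- bound on averages
  have havg_le : ∀ n : ℕ, 1 ≤ n → ∀ j : ℕ,
      (∑ k ∈ Finset.range n, ‖a (k + j)‖) / n ≤ C' := by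
    intro n hn j
    rw [div_le_iff₀ (by positivity)]
    calc ∑ k ∈ Finset.range n, ‖a (k + j)‖ ≤ ∑ _k ∈ Finset.range n, C' :=
          Finset.sum_le_sum (fun k _ => hC' _)
      _ = C' * n := by rw [Finset.sum_const, Finset.card_range]; ring
  -- Part 1 : r ≤ M
  have part1 : r ≤ M := by
    refine le_of_tendsto_of_tendsto hr hM ?_
    filter_upwards [eventually_ge_atTop 1] with n hn
    have hbddA : BddAbove (Set.range fun j : ℕ =>
        (∑ k ∈ Finset.range n, ‖a (k + j)‖) / n) :=
      ⟨C', by rintro _ ⟨j, rfl⟩; exact havg_le n hn j⟩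
    refine ciSup_le fun j => ?_
    have hgm := Real.geom_mean_le_arith_mean_weighted (Finset.range n)
      (fun _ => 1 / (n : ℝ)) (fun k => ‖a (k + j)‖)
      (fun i _ => by positivity)
      (by
        rw [Finset.sum_const, Finset.card_range, nsmul_eq_mul]
        field_simp)
      (fun i _ => norm_nonneg _)
    have hgm' : ∏ i ∈ Finset.range n, ‖a (i + j)‖ ^ ((1 : ℝ) / n)
        ≤ ∑ i ∈ Finset.range n, 1 / (n : ℝ) * ‖a (i + j)‖ := hgm
    have hrhs : ∑ i ∈ Finset.range n, 1 / (n : ℝ) * ‖a (i + j)‖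
        = (∑ k ∈ Finset.range n, ‖a (k + j)‖) / n := by
      rw [← Finset.mul_sum]; ring
    rw [hrhs] at hgm'
    calc (∏ k ∈ Finset.range n, ‖a (k + j)‖) ^ ((1 : ℝ) / n)
        = ∏ k ∈ Finset.range n, ‖a (k + j)‖ ^ ((1 : ℝ) / n) :=
          (Real.finset_prod_rpow _ _ (fun i _ => norm_nonneg _) _).symm
      _ ≤ (∑ k ∈ Finset.range n, ‖a (k + j)‖) / n := hgm'
      _ ≤ avgSup a n := le_ciSup hbddA j
  -- Part 2 : M ≤ numRad a
  have window_le : ∀ m j : ℕ,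
      (∑ k ∈ Finset.range m, ‖a (k + j)‖) / (m + 1) ≤ numRad a := by
    intro m j
    have hmem := window_mem a m j
    have hv : (0 : ℝ) ≤ (∑ k ∈ Finset.range m, ‖a (k + j)‖) / (m + 1) := by positivity
    refine le_csSup hbddN ⟨_, hmem, ?_⟩
    simp only [Complex.norm_real]
    exact Real.norm_of_nonneg hv
  have part2 : M ≤ numRad a := by
    have hev : ∀ᶠ m : ℕ in atTop, avgSup a m ≤ ((m : ℝ) + 1) / m * numRad a := by
      filter_upwards [eventually_ge_atTop 1] with m hm
      have hm0 : (0 : ℝ) < m := by exact_mod_cast hm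
      refine ciSup_le fun j => ?_
      have heq : (∑ k ∈ Finset.range m, ‖a (k + j)‖) / m
          = ((m : ℝ) + 1) / m * ((∑ k ∈ Finset.range m, ‖a (k + j)‖) / (m + 1)) := by
        field_simp
      rw [heq]
      exact mul_le_mul_of_nonneg_left (window_le m j) (by positivity)
    have t1 : Tendsto (fun m : ℕ => ((m : ℝ) + 1) / m * numRad a) atTop
        (𝓝 (1 * numRad a)) := by
      refine Tendsto.mul_const _ ?_
      have h0 : Tendsto (fun m : ℕ => 1 + 1 / (m : ℝ)) atTop (𝓝 (1 + 0)) :=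
        tendsto_const_nhds.add tendsto_one_div_atTop_nhds_zero_nat
      rw [add_zero] at h0
      refine h0.congr' ?_
      filter_upwards [eventually_ge_atTop 1] with m hm
      have hm0 : (m : ℝ) ≠ 0 := by positivity
      field_simp
    have := le_of_tendsto_of_tendsto hM t1 hev
    rwa [one_mul] at this
  exact ⟨part1, part2, part3⟩
end

section
/- If a ∈ ℓ^∞ and the sequence |a| is Cesàro convergent, then lim_{n→∞} (1/n) Σ_{k=1}^{n} |a_k| ≤ w(T_a). -/
open Filter Finset Topology

set_option maxHeartbeats 1000000 in
lemma bddNR (a : ℕ → ℂ) (ha : IsBddSeq a) :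
    BddAbove ((fun z : ℂ => ‖z‖) '' numRange a) := by
  obtain ⟨C, hC⟩ := ha
  set C' := max C 0 with hC'def
  refine ⟨C', ?_⟩
  rintro r ⟨z, ⟨x, hx, rfl⟩, rfl⟩
  have hC' : ∀ k, ‖a k‖ ≤ C' := fun k => le_max_of_le_left (hC k)
  have hC0 : 0 ≤ C' := le_max_right _ _
  have hs2 : Summable (fun k => ‖x k‖ ^ 2) := by
    by_contra h
    rw [tsum_eq_zero_of_not_summable h] at hx
    norm_num at hx
  have hs3 : Summable (fun k => ‖x (k + 1)‖ ^ 2) := (summable_nat_add_iff 1).2 hs2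
  have hbound : ∀ k, ‖a k * x k * (starRingEnd ℂ) (x (k + 1))‖
      ≤ C' * ((‖x k‖ ^ 2 + ‖x (k + 1)‖ ^ 2) / 2) := by
    intro k
    rw [norm_mul, norm_mul, RCLike.norm_conj]
    have h1 : ‖x k‖ * ‖x (k + 1)‖ ≤ (‖x k‖ ^ 2 + ‖x (k + 1)‖ ^ 2) / 2 := by nlinarith [sq_nonneg (‖x k‖ - ‖x (k + 1)‖)]
    calc ‖a k‖ * ‖x k‖ * ‖x (k + 1)‖ ≤ C' * (‖x k‖ * ‖x (k + 1)‖) := by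
          rw [mul_assoc]
          exact mul_le_mul_of_nonneg_right (hC' k) (by positivity)
      _ ≤ _ := mul_le_mul_of_nonneg_left h1 hC0
  have hg : Summable (fun k => C' * ((‖x k‖ ^ 2 + ‖x (k + 1)‖ ^ 2) / 2)) :=
    (((hs2.add hs3).div_const 2).mul_left C')
  have hf : Summable (fun k => ‖a k * x k * (starRingEnd ℂ) (x (k + 1))‖) :=
    Summable.of_nonneg_of_le (fun _ => norm_nonneg _) hbound hg
  have hshift : (∑' k, ‖x (k + 1)‖ ^ 2) ≤ 1 := by
    have := hs2.tsum_eq_zero_add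
    rw [hx] at this
    nlinarith [sq_nonneg ‖x 0‖]
  calc ‖∑' k, a k * x k * (starRingEnd ℂ) (x (k + 1))‖
      ≤ ∑' k, ‖a k * x k * (starRingEnd ℂ) (x (k + 1))‖ := norm_tsum_le_tsum_norm hf
    _ ≤ ∑' k, C' * ((‖x k‖ ^ 2 + ‖x (k + 1)‖ ^ 2) / 2) := hf.tsum_le_tsum hbound hg
    _ = C' * (((∑' k, ‖x k‖ ^ 2) + ∑' k, ‖x (k + 1)‖ ^ 2) / 2) := by
        rw [tsum_mul_left, tsum_div_const, hs2.tsum_add hs3]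
    _ ≤ C' * ((1 + 1) / 2) := by
        apply mul_le_mul_of_nonneg_left _ hC0
        apply div_le_div_of_nonneg_right _ (by norm_num)
        · exact add_le_add hx.le hshift
    _ = C' := by ring

lemma memNR_aux (a : ℕ → ℂ) (n : ℕ) :
    ∃ x : ℕ → ℂ, (∑' k, ‖x k‖ ^ 2) = (1 : ℝ) ∧
      (∑' k, a k * x k * (starRingEnd ℂ) (x (k + 1)))
        = ((∑ k ∈ Finset.range n, ‖a k‖) / (n + 1) : ℝ) := by
  set N : ℝ := n + 1 with hN
  have hN0 : (0 : ℝ) < N := by positivity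
  set u : ℕ → ℂ := fun k => if a k = 0 then 1 else a k / (‖a k‖ : ℂ) with hu
  have hu1 : ∀ k, ‖u k‖ = 1 := by
    intro k
    simp only [hu]
    split_ifs with h
    · simp
    · rw [norm_div]
      simp only [Complex.norm_real, Real.norm_eq_abs, abs_norm]
      exact div_self (norm_ne_zero_iff.2 h)
  set P : ℕ → ℂ := fun k => ∏ j ∈ Finset.range k, u j with hP
  have hP1 : ∀ k, ‖P k‖ = 1 := by
    intro k
    simp only [hP]
    rw [norm_prod]
    exact Finset.prod_eq_one (fun j _ => hu1 j)
  set x : ℕ → ℂ := fun k => if k ≤ n then P k / (Real.sqrt N : ℂ) else 0 with hxdef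
  have hxval : ∀ k, k ≤ n → ‖x k‖ ^ 2 = 1 / N := by
    intro k hk
    simp only [hxdef, if_pos hk]
    rw [norm_div, hP1, Complex.norm_real, Real.norm_eq_abs,
      abs_of_nonneg (Real.sqrt_nonneg N)]
    rw [div_pow, one_pow, Real.sq_sqrt hN0.le]
  have hx0 : ∀ k, ¬ k ≤ n → x k = 0 := fun k hk => by simp [hxdef, if_neg hk]
  refine ⟨x, ?_, ?_⟩
  · rw [tsum_eq_sum (s := Finset.range (n + 1))
      (fun k hk => by rw [hx0 k (by simpa [Nat.lt_succ_iff] using hk)]; simp)]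
    rw [Finset.sum_congr rfl (fun k hk => hxval k (by simpa [Nat.lt_succ_iff] using hk))]
    rw [Finset.sum_const, Finset.card_range, nsmul_eq_mul]
    field_simp [hN]
    simp [hN]
  · rw [tsum_eq_sum (s := Finset.range n)
      (fun k hk => by
        rw [hx0 (k + 1) (by simpa [Nat.succ_le_iff] using hk)]
        simp)]
    have hterm : ∀ k ∈ Finset.range n,
        a k * x k * (starRingEnd ℂ) (x (k + 1)) = ((‖a k‖ / N : ℝ) : ℂ) := by
      intro k hk
      rw [Finset.mem_range] at hk
      rw [hxdef]
      simp only [if_pos hk.le, if_pos (Nat.succ_le_of_lt hk)]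
      have hPs : P (k + 1) = P k * u k := Finset.prod_range_succ u k
      have hau : a k * (starRingEnd ℂ) (u k) = (‖a k‖ : ℂ) := by
        simp only [hu]
        split_ifs with h
        · simp [h]
        · rw [map_div₀, Complex.conj_ofReal, mul_div_assoc', mul_comm,
            ← Complex.normSq_eq_conj_mul_self, Complex.normSq_eq_norm_sq]
          rw [div_eq_iff (by simpa using norm_ne_zero_iff.2 h)]
          push_cast
          ring
      have hsq : ((Real.sqrt N : ℂ)) * (starRingEnd ℂ) ((Real.sqrt N : ℂ)) = (N : ℂ) := by
        rw [Complex.conj_ofReal, ← Complex.ofReal_mul, Real.mul_self_sqrt hN0.le]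
      have hPP : P k * (starRingEnd ℂ) (P k) = 1 := by
        rw [mul_comm, ← Complex.normSq_eq_conj_mul_self, Complex.normSq_eq_norm_sq,
          hP1]
        norm_num
      rw [hPs, map_div₀, map_mul]
      push_cast
      rw [show a k * (P k / (Real.sqrt N : ℂ)) * ((starRingEnd ℂ) (P k) * (starRingEnd ℂ) (u k) / (starRingEnd ℂ) ((Real.sqrt N : ℂ))) = (a k * (starRingEnd ℂ) (u k)) * (P k * (starRingEnd ℂ) (P k)) / ((Real.sqrt N : ℂ) * (starRingEnd ℂ) ((Real.sqrt N : ℂ))) from by ring]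
      rw [hau, hPP, hsq, mul_one]
    rw [Finset.sum_congr rfl hterm]
    push_cast
    rw [Finset.sum_div]

theorem stmt2 (a : ℕ → ℂ) (ha : IsBddSeq a) (l : ℝ)
    (hc : Tendsto (fun n : ℕ => (∑ k ∈ Finset.range n, ‖a k‖) / n) atTop (𝓝 l)) :
    l ≤ numRad a := by
  have hb := bddNR a ha
  have hmem : ∀ n : ℕ, ((∑ k ∈ Finset.range n, ‖a k‖) / (n + 1) : ℝ) ≤ numRad a := by
    intro n
    obtain ⟨x, hx1, hx2⟩ := memNR_aux a n
    have hm : ((∑ k ∈ Finset.range n, ‖a k‖) / (n + 1) : ℝ) ∈ (fun z : ℂ => ‖z‖) '' numRange a := by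
      refine ⟨_, ⟨x, hx1, hx2.symm⟩, ?_⟩
      simp only [Complex.norm_real, Real.norm_eq_abs]
      rw [abs_of_nonneg]
      positivity
    exact le_csSup hb hm
  have ht : Tendsto (fun n : ℕ => (∑ k ∈ Finset.range n, ‖a k‖) / ((n : ℝ) + 1)) atTop (𝓝 l) := by
    have h2 : Tendsto (fun n : ℕ => ((∑ k ∈ Finset.range n, ‖a k‖) / n) * ((n : ℝ) / (n + 1)))
        atTop (𝓝 (l * 1)) := hc.mul (tendsto_natCast_div_add_atTop (1 : ℝ))
    rw [mul_one] at h2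
    refine Tendsto.congr' ?_ h2
    filter_upwards [eventually_ne_atTop 0] with n hn
    have hn' : (n : ℝ) ≠ 0 := Nat.cast_ne_zero.2 hn
    field_simp
  exact le_of_tendsto ht (Eventually.of_forall hmem)
end

section
/- If a ∈ ℓ^∞ is periodic with period N, then the arithmetic mean (1/N) Σ_{k=1}^{N} |a_k| is at most the numerical radius w(T_a). -/
open Filter Finset Topology

set_option maxHeartbeats 1000000

noncomputable def phase (a : ℕ → ℂ) : ℕ → ℂ
  | 0 => 1
  | k+1 => if a k = 0 then phase a k else a k * phase a k / (‖a k‖ : ℂ)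

lemma norm_phase (a : ℕ → ℂ) (k : ℕ) : ‖phase a k‖ = 1 := by
  induction k with
  | zero => simp [phase]
  | succ k ih =>
    by_cases h : a k = 0
    · simp [phase, h, ih]
    · simp only [phase, if_neg h]
      rw [norm_div, norm_mul, ih]
      simp [h, norm_ne_zero_iff.mpr h]

lemma phase_term (a : ℕ → ℂ) (k : ℕ) :
    a k * phase a k * (starRingEnd ℂ) (phase a (k+1)) = (‖a k‖ : ℂ) := by
  by_cases h : a k = 0
  · simp [h]
  · simp only [phase, if_neg h]
    have hn : (‖a k‖ : ℂ) ≠ 0 := by simpa using h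
    have h1 : a k * (starRingEnd ℂ) (a k) = (‖a k‖ : ℂ)^2 := by
      rw [Complex.mul_conj]; norm_cast
      rw [Complex.normSq_eq_norm_sq]
    have h2 : phase a k * (starRingEnd ℂ) (phase a k) = 1 := by
      rw [Complex.mul_conj]; norm_cast
      rw [Complex.normSq_eq_norm_sq, norm_phase]; norm_num
    rw [map_div₀, map_mul, Complex.conj_ofReal]
    have e : a k * phase a k * ((starRingEnd ℂ) (a k) * (starRingEnd ℂ) (phase a k) / (‖a k‖ : ℂ))
        = (a k * (starRingEnd ℂ) (a k)) * (phase a k * (starRingEnd ℂ) (phase a k)) / (‖a k‖ : ℂ) := by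
      ring
    rw [e, h1, h2, mul_one, sq]
    field_simp

lemma per_mul (a : ℕ → ℂ) (N : ℕ) (hper : ∀ k, a (k + N) = a k) (k n : ℕ) :
    a (k + n * N) = a k := by
  induction n with
  | zero => simp
  | succ n ih => rw [Nat.succ_mul, ← add_assoc, hper, ih]

lemma sum_per (a : ℕ → ℂ) (N : ℕ) (hper : ∀ k, a (k + N) = a k) (n : ℕ) :
    ∑ k ∈ Finset.range (n * N), ‖a k‖ = n * ∑ k ∈ Finset.range N, ‖a k‖ := by
  induction n with
  | zero => simp
  | succ n ih =>
    rw [Nat.succ_mul, Finset.sum_range_add, ih]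
    have : ∀ k, ‖a (n * N + k)‖ = ‖a k‖ := by
      intro k; rw [add_comm, per_mul a N hper]
    simp only [this]
    push_cast; ring

lemma norm_a_le (a : ℕ → ℂ) (N : ℕ) (hN : 0 < N) (hper : ∀ k, a (k + N) = a k) (k : ℕ) :
    ‖a k‖ ≤ ∑ j ∈ Finset.range N, ‖a j‖ := by
  have h1 : a k = a (k % N) := by
    conv_lhs => rw [← Nat.mod_add_div' k N, per_mul a N hper]
  rw [h1]
  exact Finset.single_le_sum (f := fun j => ‖a j‖) (fun j _ => norm_nonneg _)
    (Finset.mem_range.mpr (Nat.mod_lt k hN))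

lemma mem_numRange (a : ℕ → ℂ) (M : ℕ) :
    (((∑ k ∈ Finset.range M, ‖a k‖) / (M+1) : ℝ) : ℂ) ∈ numRange a := by
  set r : ℝ := Real.sqrt (1/(M+1)) with hr
  have hr2 : r^2 = 1/(M+1) := Real.sq_sqrt (by positivity)
  have hrn : (0:ℝ) ≤ r := Real.sqrt_nonneg _
  set x : ℕ → ℂ := fun k => if k < M+1 then phase a k * (r : ℂ) else 0 with hx
  refine ⟨x, ?_, ?_⟩
  · have hvan : ∀ k ∉ Finset.range (M+1), ‖x k‖^2 = 0 := by
      intro k hk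
      have h2 : ¬ k < M+1 := by simpa using hk
      simp [hx, h2]
      intro h3; omega
    rw [tsum_eq_sum hvan]
    have hval : ∀ k ∈ Finset.range (M+1), ‖x k‖^2 = 1/(M+1) := by
      intro k hk
      simp only [hx, if_pos (Finset.mem_range.mp hk)]
      rw [norm_mul, norm_phase, one_mul, Complex.norm_real, Real.norm_of_nonneg hrn, hr2]
    rw [Finset.sum_congr rfl hval, Finset.sum_const, Finset.card_range, nsmul_eq_mul]
    push_cast
    field_simp
  · have hvan : ∀ k ∉ Finset.range M, a k * x k * (starRingEnd ℂ) (x (k+1)) = 0 := by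
      intro k hk
      have hk' : M ≤ k := by simpa using hk
      have h2 : ¬ (k+1 < M+1) := by omega
      have : x (k+1) = 0 := by simp only [hx]; rw [if_neg h2]
      rw [this]; simp
    rw [tsum_eq_sum hvan]
    have hval : ∀ k ∈ Finset.range M, a k * x k * (starRingEnd ℂ) (x (k+1))
        = (‖a k‖ : ℂ) * (r:ℂ)^2 := by
      intro k hk
      have hk' : k < M := Finset.mem_range.mp hk
      simp only [hx, if_pos (by omega : k < M+1), if_pos (by omega : k+1 < M+1)]
      rw [map_mul, Complex.conj_ofReal]
      have : a k * (phase a k * (r:ℂ)) * ((starRingEnd ℂ) (phase a (k+1)) * (r:ℂ))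
          = (a k * phase a k * (starRingEnd ℂ) (phase a (k+1))) * (r:ℂ)^2 := by ring
      rw [this, phase_term]
    rw [Finset.sum_congr rfl hval, ← Finset.sum_mul]
    have hrc : ((r:ℂ))^2 = (1:ℂ)/((M:ℂ)+1) := by
      rw [← Complex.ofReal_pow, hr2]; push_cast; ring
    rw [hrc]
    push_cast
    ring

lemma numRange_bdd (a : ℕ → ℂ) (C : ℝ) (hC : ∀ k, ‖a k‖ ≤ C) :
    ∀ y ∈ (fun z : ℂ => ‖z‖) '' numRange a, y ≤ C := by
  rintro y ⟨z, ⟨x, hx1, rfl⟩, rfl⟩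
  have hC0 : (0:ℝ) ≤ C := le_trans (norm_nonneg _) (hC 0)
  have hsum : Summable fun k => ‖x k‖^2 := by
    by_contra h
    rw [tsum_eq_zero_of_not_summable h] at hx1
    norm_num at hx1
  have hsum' : Summable fun k => ‖x (k+1)‖^2 := by
    exact (summable_nat_add_iff 1).mpr hsum
  set g : ℕ → ℂ := fun k => a k * x k * (starRingEnd ℂ) (x (k+1)) with hg
  have hb : ∀ k, ‖g k‖ ≤ C * ((‖x k‖^2 + ‖x (k+1)‖^2)/2) := by
    intro k
    have h1 : ‖g k‖ = ‖a k‖ * ‖x k‖ * ‖x (k+1)‖ := by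
      rw [hg]; simp [norm_mul]
    rw [h1]
    nlinarith [hC k, norm_nonneg (a k), norm_nonneg (x k), norm_nonneg (x (k+1)),
      sq_nonneg (‖x k‖ - ‖x (k+1)‖)]
  have hS : Summable fun k => C * ((‖x k‖^2 + ‖x (k+1)‖^2)/2) :=
    (((hsum.add hsum').div_const 2).mul_left C)
  have hgsum : Summable fun k => ‖g k‖ :=
    Summable.of_nonneg_of_le (fun k => norm_nonneg _) hb hS
  have ht : (∑' k, ‖x (k+1)‖^2) ≤ 1 := by
    rw [← hx1]
    exact hsum'.tsum_le_tsum_of_inj (fun n => n+1) (add_left_injective 1)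
      (fun c _ => sq_nonneg _) (fun b => le_refl _) hsum
  calc ‖∑' k, g k‖ ≤ ∑' k, ‖g k‖ := norm_tsum_le_tsum_norm hgsum
    _ ≤ ∑' k, C * ((‖x k‖^2 + ‖x (k+1)‖^2)/2) := Summable.tsum_le_tsum hb hgsum hS
    _ = C * (((∑' k, ‖x k‖^2) + ∑' k, ‖x (k+1)‖^2)/2) := by
        rw [tsum_mul_left, tsum_div_const, Summable.tsum_add hsum hsum']
    _ ≤ C * ((1 + 1)/2) := by
        apply mul_le_mul_of_nonneg_left _ hC0
        rw [hx1]
        linarith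
    _ = C := by ring

theorem stmt4 (a : ℕ → ℂ) (N : ℕ) (hN : 0 < N) (hper : ∀ k, a (k + N) = a k) :
    (∑ k ∈ Finset.range N, ‖a k‖) / N ≤ numRad a := by
  set S : ℝ := ∑ k ∈ Finset.range N, ‖a k‖ with hS
  have hS0 : 0 ≤ S := Finset.sum_nonneg fun _ _ => norm_nonneg _
  have hBdd : BddAbove ((fun z : ℂ => ‖z‖) '' numRange a) :=
    ⟨S, numRange_bdd a S (norm_a_le a N hN hper)⟩
  -- each average value is ≤ numRad
  have hle : ∀ n : ℕ, (n * S) / (n * N + 1) ≤ numRad a := by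
    intro n
    have hmem := mem_numRange a (n * N)
    have hval : (∑ k ∈ Finset.range (n * N), ‖a k‖) / ((n*N : ℕ)+1) = (n * S) / (n * N + 1) := by
      rw [sum_per a N hper n]
      push_cast
      ring_nf
      rw [hS]; ring
    have hnonneg : 0 ≤ (n * S) / (n * N + 1 : ℝ) := by positivity
    have : ‖(((∑ k ∈ Finset.range (n*N), ‖a k‖) / ((n*N : ℕ)+1) : ℝ) : ℂ)‖
        = (n * S) / (n * N + 1) := by
      rw [Complex.norm_real, hval, Real.norm_of_nonneg hnonneg]
    calc (n * S) / (n * N + 1) = _ := this.symm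
      _ ≤ numRad a := le_csSup hBdd ⟨_, hmem, rfl⟩
  -- the limit
  have hNne : (N:ℝ) ≠ 0 := Nat.cast_ne_zero.mpr hN.ne'
  have hlim : Tendsto (fun n : ℕ => (n * S) / (n * N + 1)) atTop (𝓝 (S / N)) := by
    have h1 : Tendsto (fun n : ℕ => (N:ℝ) + 1/n) atTop (𝓝 ((N:ℝ) + 0)) :=
      tendsto_const_nhds.add tendsto_one_div_atTop_nhds_zero_nat
    rw [add_zero] at h1
    have h2 : Tendsto (fun n : ℕ => S / ((N:ℝ) + 1/n)) atTop (𝓝 (S / N)) :=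
      tendsto_const_nhds.div h1 hNne
    apply h2.congr'
    filter_upwards [eventually_ge_atTop 1] with n hn
    have hn0 : (n:ℝ) ≠ 0 := Nat.cast_ne_zero.mpr (by omega)
    field_simp
  exact le_of_tendsto hlim (Eventually.of_forall hle)
end

section
/- For each m ∈ ℕ, the linear operator R_m : ℓ^∞ → ℓ^∞ defined by R_m(a) = (a_m, a_m, a_m, ...) satisfies ‖R_m‖ = 1 with respect to the uniform norm, and ‖R_m‖_w = 2 with respect to the norm ‖a‖_w := w(T_a). -/
open Filter Finset Topology

private lemma summable_sq {x : ℕ → ℂ} (h : (∑' k, ‖x k‖ ^ 2) = (1 : ℝ)) :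
    Summable fun k => ‖x k‖ ^ 2 := by
  by_contra hs
  rw [tsum_eq_zero_of_not_summable hs] at h
  norm_num at h

set_option maxHeartbeats 1000000 in
private lemma norm_le_of_mem {a : ℕ → ℂ} {C : ℝ} (hC : ∀ k, ‖a k‖ ≤ C) :
    ∀ z ∈ numRange a, ‖z‖ ≤ C := by
  rintro z ⟨x, hx, rfl⟩
  have hC0 : 0 ≤ C := le_trans (norm_nonneg _) (hC 0)
  have hg : Summable fun k => ‖x k‖ ^ 2 := summable_sq hx
  have hg' : Summable fun k => ‖x (k + 1)‖ ^ 2 := (summable_nat_add_iff 1).2 hg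
  set F : ℕ → ℝ := fun k => C * ((‖x k‖ ^ 2 + ‖x (k + 1)‖ ^ 2) / 2) with hF
  have hFs : Summable F := ((hg.add hg').div_const 2).mul_left C
  have hbound : ∀ k, ‖a k * x k * (starRingEnd ℂ) (x (k + 1))‖ ≤ F k := by
    intro k
    have h1 : ‖a k * x k * (starRingEnd ℂ) (x (k + 1))‖
        = ‖a k‖ * (‖x k‖ * ‖x (k + 1)‖) := by
      simp [mul_assoc]
    rw [h1, hF]
    have h2 : ‖x k‖ * ‖x (k + 1)‖ ≤ (‖x k‖ ^ 2 + ‖x (k + 1)‖ ^ 2) / 2 := by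
      nlinarith [sq_nonneg (‖x k‖ - ‖x (k + 1)‖)]
    exact mul_le_mul (hC k) h2 (by positivity) hC0
  have hnorm : Summable fun k => ‖a k * x k * (starRingEnd ℂ) (x (k + 1))‖ :=
    Summable.of_nonneg_of_le (fun k => norm_nonneg _) hbound hFs
  have hsum1 : ∑' k, ‖x (k + 1)‖ ^ 2 ≤ 1 := by
    have h0 := Summable.tsum_eq_zero_add hg
    have hx0 : 0 ≤ ‖x 0‖ ^ 2 := sq_nonneg _
    rw [hx] at h0
    linarith
  calc ‖∑' k, a k * x k * (starRingEnd ℂ) (x (k + 1))‖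
      ≤ ∑' k, ‖a k * x k * (starRingEnd ℂ) (x (k + 1))‖ := norm_tsum_le_tsum_norm hnorm
    _ ≤ ∑' k, F k := Summable.tsum_le_tsum hbound hnorm hFs
    _ = C * ((∑' k, ‖x k‖ ^ 2 + ∑' k, ‖x (k + 1)‖ ^ 2) / 2) := by
        rw [hF, tsum_mul_left, tsum_div_const, Summable.tsum_add hg hg']
    _ ≤ C * ((1 + 1) / 2) := by
        apply mul_le_mul_of_nonneg_left _ hC0
        rw [hx]
        linarith
    _ = C := by ring

private lemma bddAbove_image {a : ℕ → ℂ} {C : ℝ} (hC : ∀ k, ‖a k‖ ≤ C) :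
    BddAbove ((fun z : ℂ => ‖z‖) '' numRange a) := by
  refine ⟨C, ?_⟩
  rintro _ ⟨z, hz, rfl⟩
  exact norm_le_of_mem hC z hz

private lemma numRad_le {a : ℕ → ℂ} {C : ℝ} (hC : ∀ k, ‖a k‖ ≤ C) :
    numRad a ≤ C := by
  have hC0 : 0 ≤ C := le_trans (norm_nonneg _) (hC 0)
  apply Real.sSup_le _ hC0
  rintro _ ⟨z, hz, rfl⟩
  exact norm_le_of_mem hC z hz

/-- `a m / 2` is in the numerical range, via the vector supported on `{m, m+1}`. -/
private lemma half_mem (a : ℕ → ℂ) (m : ℕ) : a m / 2 ∈ numRange a := by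
  classical
  set c : ℝ := (Real.sqrt 2)⁻¹ with hcdef
  have hc2 : c * c = 1 / 2 := by
    rw [hcdef, ← mul_inv]
    rw [Real.mul_self_sqrt (by norm_num : (0:ℝ) ≤ 2)]
    norm_num
  have hc0 : 0 ≤ c := by positivity
  set x : ℕ → ℂ := fun k => if k = m ∨ k = m + 1 then (c : ℂ) else 0 with hxdef
  refine ⟨x, ?_, ?_⟩
  · have hsupp : ∀ b ∉ ({m, m + 1} : Finset ℕ), ‖x b‖ ^ 2 = 0 := by
      intro b hb
      simp only [Finset.mem_insert, Finset.mem_singleton] at hb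
      push_neg at hb
      simp [hxdef, hb.1, hb.2]
    rw [tsum_eq_sum hsupp, Finset.sum_insert (by simp), Finset.sum_singleton]
    have h1 : ‖x m‖ ^ 2 = 1 / 2 := by
      simp only [hxdef, if_pos (Or.inl rfl)]
      rw [Complex.norm_real, Real.norm_of_nonneg hc0, sq, hc2]
    have h2 : ‖x (m + 1)‖ ^ 2 = 1 / 2 := by
      simp only [hxdef, if_pos (Or.inr rfl)]
      rw [Complex.norm_real, Real.norm_of_nonneg hc0, sq, hc2]
    rw [h1, h2]; norm_num
  · rw [tsum_eq_single m]
    · have hxm : x m = (c : ℂ) := by simp [hxdef]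
      have hxm1 : x (m + 1) = (c : ℂ) := by simp [hxdef]
      rw [hxm, hxm1, Complex.conj_ofReal]
      rw [mul_assoc, ← Complex.ofReal_mul, hc2]
      push_cast
      ring
    · intro b hb
      rcases eq_or_ne b (m + 1) with hb1 | hb1
      · have : x (b + 1) = 0 := by
          subst hb1
          simp only [hxdef]
          rw [if_neg]
          push_neg
          omega
        rw [this]
        simp
      · have : x b = 0 := by
          simp only [hxdef]
          rw [if_neg]
          push_neg
          exact ⟨hb, hb1⟩
        rw [this]
        ring

private lemma half_le {a : ℕ → ℂ} {C : ℝ} (hC : ∀ k, ‖a k‖ ≤ C) (m : ℕ) :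
    ‖a m‖ / 2 ≤ numRad a := by
  have hmem : ‖a m‖ / 2 ∈ (fun z : ℂ => ‖z‖) '' numRange a := by
    refine ⟨a m / 2, half_mem a m, ?_⟩
    show ‖a m / 2‖ = ‖a m‖ / 2
    rw [norm_div]
    norm_num
  exact le_csSup (bddAbove_image hC) hmem

set_option maxHeartbeats 1000000 in
private lemma mem_geom {r : ℝ} (h0 : 0 ≤ r) (h1 : r < 1) :
    (r : ℂ) ∈ numRange (fun _ => (1 : ℂ)) := by
  have hr2 : r ^ 2 < 1 := by nlinarith
  have hr2' : (0:ℝ) ≤ r ^ 2 := sq_nonneg r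
  have hne : (1 : ℝ) - r ^ 2 ≠ 0 := by nlinarith
  set s : ℝ := Real.sqrt (1 - r ^ 2) with hsdef
  have hs0 : 0 ≤ s := Real.sqrt_nonneg _
  have hs2 : s ^ 2 = 1 - r ^ 2 := Real.sq_sqrt (by nlinarith)
  have hgeo : ∑' k : ℕ, (r ^ 2) ^ k = (1 - r ^ 2)⁻¹ := tsum_geometric_of_lt_one hr2' hr2
  refine ⟨fun k => ((s * r ^ k : ℝ) : ℂ), ?_, ?_⟩
  · have heq : ∀ k : ℕ, ‖((s * r ^ k : ℝ) : ℂ)‖ ^ 2 = (1 - r ^ 2) * (r ^ 2) ^ k := by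
      intro k
      rw [Complex.norm_real, Real.norm_of_nonneg (by positivity), mul_pow, hs2, ← pow_mul,
        mul_comm k 2, pow_mul]
    rw [tsum_congr heq, tsum_mul_left, hgeo, mul_inv_cancel₀ hne]
  · have heq : ∀ k : ℕ,
        (1 : ℂ) * ((s * r ^ k : ℝ) : ℂ) * (starRingEnd ℂ) ((s * r ^ (k + 1) : ℝ) : ℂ)
        = (((1 - r ^ 2) * r * (r ^ 2) ^ k : ℝ) : ℂ) := by
      intro k
      rw [Complex.conj_ofReal, one_mul, ← Complex.ofReal_mul]
      congr 1
      rw [← hs2]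
      ring
    rw [tsum_congr heq, ← Complex.ofReal_tsum, tsum_mul_left, hgeo]
    norm_cast
    field_simp

private lemma one_le_numRad_one : (1 : ℝ) ≤ numRad (fun _ => (1 : ℂ)) := by
  have hbdd : BddAbove ((fun z : ℂ => ‖z‖) '' numRange (fun _ => (1 : ℂ))) :=
    bddAbove_image (fun k => le_refl ‖(1:ℂ)‖)
  apply le_of_forall_lt
  intro c hc
  set r : ℝ := max ((c + 1) / 2) (1 / 2) with hrdef
  have h0 : 0 ≤ r := le_trans (by norm_num) (le_max_right _ _)
  have h1 : r < 1 := by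
    rw [hrdef]
    apply max_lt
    · linarith
    · norm_num
  have hcr : c < r := by
    rcases le_or_gt 0 c with h | h
    · calc c < (c + 1) / 2 := by linarith
        _ ≤ r := le_max_left _ _
    · calc c < 1 / 2 := by linarith
        _ ≤ r := le_max_right _ _
  have hmem : r ∈ (fun z : ℂ => ‖z‖) '' numRange (fun _ => (1 : ℂ)) := by
    refine ⟨(r : ℂ), mem_geom h0 h1, ?_⟩
    show ‖(r : ℂ)‖ = r
    rw [Complex.norm_real, Real.norm_of_nonneg h0]
  exact lt_of_lt_of_le hcr (le_csSup hbdd hmem)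

set_option maxHeartbeats 1000000 in
private lemma em_le (m : ℕ) : numRad (fun k => if k = m then (1 : ℂ) else 0) ≤ 1 / 2 := by
  apply Real.sSup_le _ (by norm_num)
  rintro _ ⟨z, ⟨x, hx, rfl⟩, rfl⟩
  have hz : (∑' k, (if k = m then (1 : ℂ) else 0) * x k * (starRingEnd ℂ) (x (k + 1)))
      = x m * (starRingEnd ℂ) (x (m + 1)) := by
    rw [tsum_eq_single m]
    · simp
    · intro b hb
      simp [hb]
  show ‖∑' k, (if k = m then (1 : ℂ) else 0) * x k * (starRingEnd ℂ) (x (k + 1))‖ ≤ 1 / 2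
  rw [hz]
  have hg := summable_sq hx
  have hfin : ‖x m‖ ^ 2 + ‖x (m + 1)‖ ^ 2 ≤ 1 := by
    have hle := Summable.sum_le_tsum ({m, m + 1} : Finset ℕ) (fun b _ => sq_nonneg _) hg
    rw [Finset.sum_insert (by simp), Finset.sum_singleton, hx] at hle
    exact hle
  have hmul : ‖x m * (starRingEnd ℂ) (x (m + 1))‖ = ‖x m‖ * ‖x (m + 1)‖ := by
    simp
  rw [hmul]
  nlinarith [sq_nonneg (‖x m‖ - ‖x (m + 1)‖), norm_nonneg (x m), norm_nonneg (x (m + 1))]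

theorem stmt7 (m : ℕ) :
    IsLeast {c : ℝ | 0 ≤ c ∧ ∀ a : ℕ → ℂ, IsBddSeq a →
      supNorm (fun _ => a m) ≤ c * supNorm a} 1 ∧
    IsLeast {c : ℝ | 0 ≤ c ∧ ∀ a : ℕ → ℂ, IsBddSeq a →
      numRad (fun _ => a m) ≤ c * numRad a} 2 := by
  constructor
  · constructor
    · refine ⟨zero_le_one, fun a ha => ?_⟩
      obtain ⟨C, hC⟩ := ha
      rw [one_mul]
      show (⨆ _ : ℕ, ‖a m‖) ≤ ⨆ k, ‖a k‖
      rw [ciSup_const]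
      exact le_ciSup ⟨C, by rintro _ ⟨k, rfl⟩; exact hC k⟩ m
    · rintro c ⟨hc0, hc⟩
      have h := hc (fun _ => 1) ⟨1, by simp⟩
      simpa [supNorm, ciSup_const] using h
  · constructor
    · refine ⟨by norm_num, fun a ha => ?_⟩
      obtain ⟨C, hC⟩ := ha
      have h1 : numRad (fun _ => a m) ≤ ‖a m‖ := numRad_le (fun k => le_refl _)
      have h2 : ‖a m‖ / 2 ≤ numRad a := half_le hC m
      linarith
    · rintro c ⟨hc0, hc⟩
      have h := hc (fun k => if k = m then (1 : ℂ) else 0)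
        ⟨1, fun k => by by_cases hk : k = m <;> simp [hk]⟩
      have hfun : (fun _ : ℕ => (if m = m then (1 : ℂ) else 0)) = fun _ => (1 : ℂ) := by
        simp
      rw [hfun] at h
      have h1 := one_le_numRad_one
      have h2 := em_le m
      have h3 : c * numRad (fun k => if k = m then (1 : ℂ) else 0) ≤ c * (1 / 2) :=
        mul_le_mul_of_nonneg_left h2 hc0
      linarith
end

section
/- For every d ∈ ℓ^∞, the multiplication operator M_d : ℓ^∞ → ℓ^∞, (M_d a)_k = d_k a_k, satisfies ‖M_d‖_w = ‖d‖_∞, where the operator norm is taken with respect to the norm ‖a‖_w := w(T_a) on ℓ^∞. -/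
open Filter Finset Topology

/-! ### Auxiliary lemmas -/

lemma unit_summable {x : ℕ → ℂ} (h : (∑' k, ‖x k‖ ^ 2) = (1 : ℝ)) :
    Summable (fun k => ‖x k‖ ^ 2) := by
  by_contra hs
  rw [tsum_eq_zero_of_not_summable hs] at h
  norm_num at h

lemma cross_summable {x : ℕ → ℂ} (h : Summable fun k => ‖x k‖ ^ 2) :
    Summable fun k => ‖x k‖ * ‖x (k + 1)‖ := by
  have hs : Summable fun k => ‖x (k + 1)‖ ^ 2 := h.comp_injective Nat.succ_injective
  refine Summable.of_nonneg_of_le (fun k => by positivity) (fun k => ?_)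
    ((h.add hs).div_const 2)
  nlinarith [sq_nonneg (‖x k‖ - ‖x (k + 1)‖)]

lemma cross_tsum_le {x : ℕ → ℂ} (h1 : (∑' k, ‖x k‖ ^ 2) = (1 : ℝ)) :
    (∑' k, ‖x k‖ * ‖x (k + 1)‖) ≤ 1 := by
  have h := unit_summable h1
  have hs : Summable fun k => ‖x (k + 1)‖ ^ 2 := h.comp_injective Nat.succ_injective
  have h2 : (∑' k, ‖x (k + 1)‖ ^ 2) ≤ 1 := by
    rw [← h1]
    exact Summable.tsum_le_tsum_of_inj Nat.succ Nat.succ_injective (fun c _ => by positivity)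
      (fun k => le_refl _) hs h
  calc (∑' k, ‖x k‖ * ‖x (k + 1)‖)
      ≤ ∑' k, (‖x k‖ ^ 2 + ‖x (k + 1)‖ ^ 2) / 2 :=
        Summable.tsum_le_tsum (fun k => by nlinarith [sq_nonneg (‖x k‖ - ‖x (k + 1)‖)])
          (cross_summable h) ((h.add hs).div_const 2)
    _ = ((∑' k, ‖x k‖ ^ 2) + ∑' k, ‖x (k + 1)‖ ^ 2) / 2 := by
        rw [tsum_div_const, Summable.tsum_add h hs]
    _ ≤ 1 := by rw [h1]; linarith

lemma term_norm_summable {b x : ℕ → ℂ} {C : ℝ} (hb : ∀ k, ‖b k‖ ≤ C)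
    (h : Summable fun k => ‖x k‖ ^ 2) :
    Summable fun k => ‖b k * x k * (starRingEnd ℂ) (x (k + 1))‖ := by
  refine Summable.of_nonneg_of_le (fun k => norm_nonneg _) (fun k => ?_)
    ((cross_summable h).mul_left C)
  rw [norm_mul, norm_mul, RCLike.norm_conj, mul_assoc]
  exact mul_le_mul_of_nonneg_right (hb k) (by positivity)

lemma norm_numRange_le {b : ℕ → ℂ} {C : ℝ} (hb : ∀ k, ‖b k‖ ≤ C) {z : ℂ}
    (hz : z ∈ numRange b) : ‖z‖ ≤ C := by
  obtain ⟨x, hx1, rfl⟩ := hz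
  have h := unit_summable hx1
  have h0 : (0 : ℝ) ≤ C := (norm_nonneg _).trans (hb 0)
  calc ‖∑' k, b k * x k * (starRingEnd ℂ) (x (k + 1))‖
      ≤ ∑' k, ‖b k * x k * (starRingEnd ℂ) (x (k + 1))‖ :=
        norm_tsum_le_tsum_norm (term_norm_summable hb h)
    _ ≤ ∑' k, C * (‖x k‖ * ‖x (k + 1)‖) := by
        refine Summable.tsum_le_tsum (fun k => ?_) (term_norm_summable hb h)
          ((cross_summable h).mul_left C)
        rw [norm_mul, norm_mul, RCLike.norm_conj, mul_assoc]
        exact mul_le_mul_of_nonneg_right (hb k) (by positivity)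
    _ = C * ∑' k, ‖x k‖ * ‖x (k + 1)‖ := tsum_mul_left
    _ ≤ C * 1 := mul_le_mul_of_nonneg_left (cross_tsum_le hx1) h0
    _ = C := mul_one C

lemma zero_mem_image (b : ℕ → ℂ) : (0 : ℝ) ∈ (fun z : ℂ => ‖z‖) '' numRange b := by
  refine ⟨0, ⟨fun k => if k = 0 then 1 else 0, ?_, ?_⟩, norm_zero⟩
  · have : (fun k : ℕ => ‖(if k = 0 then (1 : ℂ) else 0)‖ ^ 2)
        = fun k : ℕ => if k = 0 then (1 : ℝ) else 0 := by
      funext k; split <;> simp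
    rw [this, tsum_ite_eq]
  · symm
    simp

lemma bddAbove_image_s12 {b : ℕ → ℂ} (hb : IsBddSeq b) :
    BddAbove ((fun z : ℂ => ‖z‖) '' numRange b) := by
  obtain ⟨C, hC⟩ := hb
  exact ⟨C, by rintro t ⟨z, hz, rfl⟩; exact norm_numRange_le hC hz⟩

lemma numRad_nonneg {b : ℕ → ℂ} (hb : IsBddSeq b) : 0 ≤ numRad b :=
  le_csSup (bddAbove_image_s12 hb) (zero_mem_image b)

/-- The key "phase trick": the absolutized sum is itself a numerical-range value. -/
lemma abs_tsum_le_numRad {a x : ℕ → ℂ} (ha : IsBddSeq a)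
    (hx1 : (∑' k, ‖x k‖ ^ 2) = (1 : ℝ)) :
    (∑' k, ‖a k‖ * (‖x k‖ * ‖x (k + 1)‖)) ≤ numRad a := by
  obtain ⟨C, hC⟩ := ha
  have hx := unit_summable hx1
  set ph : ℕ → ℝ := fun n => ∑ i ∈ Finset.range n, (a i).arg with hph
  set y : ℕ → ℂ := fun k => (‖x k‖ : ℝ) * Complex.exp ((ph k : ℝ) * Complex.I) with hy
  have hynorm : ∀ k, ‖y k‖ = ‖x k‖ := by
    intro k
    simp [hy, map_mul, Complex.norm_exp_ofReal_mul_I,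
      Complex.norm_real, abs_of_nonneg (norm_nonneg (x k))]
  have hy1 : (∑' k, ‖y k‖ ^ 2) = (1 : ℝ) := by
    have : (fun k => ‖y k‖ ^ 2) = fun k => ‖x k‖ ^ 2 := funext fun k => by rw [hynorm]
    rw [this, hx1]
  have key : ∀ k, a k * y k * (starRingEnd ℂ) (y (k + 1))
      = ((‖a k‖ * (‖x k‖ * ‖x (k + 1)‖) : ℝ) : ℂ) := by
    intro k
    have hconj : (starRingEnd ℂ) (y (k + 1))
        = (‖x (k + 1)‖ : ℂ) * Complex.exp (-(ph (k + 1) : ℝ) * Complex.I) := by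
      simp only [hy, map_mul, Complex.conj_ofReal, ← Complex.exp_conj]
      congr 2
      simp [Complex.conj_I]
    have hphsucc : ph (k + 1) = ph k + (a k).arg := Finset.sum_range_succ _ _
    rw [hconj]
    have h1 : a k * Complex.exp ((ph k : ℝ) * Complex.I)
        * Complex.exp (-(ph (k + 1) : ℝ) * Complex.I) = (‖a k‖ : ℂ) := by
      conv_lhs => rw [← Complex.norm_mul_exp_arg_mul_I (a k)]
      rw [mul_assoc, mul_assoc, ← Complex.exp_add, ← Complex.exp_add, hphsucc]
      push_cast
      rw [show ((a k).arg : ℂ) * Complex.I + (((ph k : ℂ)) * Complex.I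
        + -(((ph k : ℂ)) + ((a k).arg : ℂ)) * Complex.I) = 0 by ring, Complex.exp_zero, mul_one]
    calc a k * ((‖x k‖ : ℂ) * Complex.exp ((ph k : ℝ) * Complex.I))
          * ((‖x (k + 1)‖ : ℂ) * Complex.exp (-(ph (k + 1) : ℝ) * Complex.I))
        = (a k * Complex.exp ((ph k : ℝ) * Complex.I)
            * Complex.exp (-(ph (k + 1) : ℝ) * Complex.I))
            * ((‖x k‖ : ℂ) * (‖x (k + 1)‖ : ℂ)) := by ring
      _ = ((‖a k‖ * (‖x k‖ * ‖x (k + 1)‖) : ℝ) : ℂ) := by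
          rw [h1]
          push_cast
          try ring
  have hz : (((∑' k, ‖a k‖ * (‖x k‖ * ‖x (k + 1)‖)) : ℝ) : ℂ) ∈ numRange a := by
    refine ⟨y, hy1, ?_⟩
    rw [Complex.ofReal_tsum]
    exact tsum_congr fun k => (key k).symm
  have hnn : (0 : ℝ) ≤ ∑' k, ‖a k‖ * (‖x k‖ * ‖x (k + 1)‖) :=
    tsum_nonneg fun k => by positivity
  have := le_csSup (bddAbove_image_s12 ⟨C, hC⟩)
    (Set.mem_image_of_mem (fun z : ℂ => ‖z‖) hz)
  have h2 : (∑' k, ‖a k‖ * (‖x k‖ * ‖x (k + 1)‖))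
      = ‖(((∑' k, ‖a k‖ * (‖x k‖ * ‖x (k + 1)‖)) : ℝ) : ℂ)‖ := by
    rw [Complex.norm_real, Real.norm_eq_abs, abs_of_nonneg hnn]
  rw [h2]
  exact this

lemma supNorm_nonneg (d : ℕ → ℂ) : 0 ≤ supNorm d :=
  Real.iSup_nonneg fun k => norm_nonneg _

lemma numRad_mul_le {d a : ℕ → ℂ} (hd : IsBddSeq d) (ha : IsBddSeq a) :
    numRad (fun k => d k * a k) ≤ supNorm d * numRad a := by
  obtain ⟨Cd, hCd⟩ := hd
  obtain ⟨Ca, hCa⟩ := ha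
  have hCa0 : (0 : ℝ) ≤ Ca := (norm_nonneg _).trans (hCa 0)
  have hdk : ∀ k, ‖d k‖ ≤ supNorm d := fun k =>
    le_ciSup ⟨Cd, Set.forall_mem_range.2 hCd⟩ k
  apply csSup_le ⟨0, zero_mem_image _⟩
  rintro t ⟨z, ⟨x, hx1, rfl⟩, rfl⟩
  have hx := unit_summable hx1
  have hbd : ∀ k, ‖d k * a k‖ ≤ Cd * Ca := fun k => by
    rw [norm_mul]
    exact mul_le_mul (hCd k) (hCa k) (norm_nonneg _) ((norm_nonneg _).trans (hCd 0))
  have hsum1 : Summable fun k => ‖a k‖ * (‖x k‖ * ‖x (k + 1)‖) := by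
    refine Summable.of_nonneg_of_le (fun k => by positivity) (fun k => ?_)
      ((cross_summable hx).mul_left Ca)
    exact mul_le_mul_of_nonneg_right (hCa k) (by positivity)
  calc ‖∑' k, (d k * a k) * x k * (starRingEnd ℂ) (x (k + 1))‖
      ≤ ∑' k, ‖(d k * a k) * x k * (starRingEnd ℂ) (x (k + 1))‖ :=
        norm_tsum_le_tsum_norm (term_norm_summable hbd hx)
    _ ≤ ∑' k, supNorm d * (‖a k‖ * (‖x k‖ * ‖x (k + 1)‖)) := by
        refine Summable.tsum_le_tsum (fun k => ?_) (term_norm_summable hbd hx)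
          (hsum1.mul_left _)
        rw [norm_mul, norm_mul, norm_mul, RCLike.norm_conj, mul_assoc, mul_assoc]
        exact mul_le_mul_of_nonneg_right (hdk k) (by positivity)
    _ = supNorm d * ∑' k, ‖a k‖ * (‖x k‖ * ‖x (k + 1)‖) := tsum_mul_left
    _ ≤ supNorm d * numRad a :=
        mul_le_mul_of_nonneg_left (abs_tsum_le_numRad ⟨Ca, hCa⟩ hx1) (supNorm_nonneg d)

lemma numRad_single (j : ℕ) (c : ℂ) :
    numRad (fun k => if k = j then c else 0) = ‖c‖ / 2 := by
  have hb : ∀ k, ‖(if k = j then c else 0 : ℂ)‖ ≤ ‖c‖ := fun k => by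
    split <;> simp [norm_nonneg]
  apply le_antisymm
  · apply csSup_le ⟨0, zero_mem_image _⟩
    rintro t ⟨z, ⟨x, hx1, rfl⟩, rfl⟩
    have hx := unit_summable hx1
    have hz : (∑' k, (if k = j then c else 0) * x k * (starRingEnd ℂ) (x (k + 1)))
        = c * x j * (starRingEnd ℂ) (x (j + 1)) := by
      rw [tsum_eq_single j (fun k hk => by simp [hk])]
      simp
    dsimp only
    rw [hz]
    have hpair : ‖x j‖ ^ 2 + ‖x (j + 1)‖ ^ 2 ≤ 1 := by
      have := Summable.sum_le_tsum ({j, j + 1} : Finset ℕ) (fun k _ => by positivity) hx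
      rw [Finset.sum_pair (Nat.lt_succ_self j).ne, hx1] at this
      exact this
    rw [norm_mul, norm_mul, RCLike.norm_conj]
    nlinarith [norm_nonneg (x j), norm_nonneg (x (j + 1)), norm_nonneg c,
      sq_nonneg (‖x j‖ - ‖x (j + 1)‖)]
  · set s : ℝ := (Real.sqrt 2)⁻¹ with hs
    have hs2 : s ^ 2 = 1 / 2 := by
      rw [hs, inv_pow, Real.sq_sqrt (by norm_num : (0:ℝ) ≤ 2)]
      norm_num
    set x : ℕ → ℂ := fun k => if k = j ∨ k = j + 1 then (s : ℂ) else 0 with hxdef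
    have hx1 : (∑' k, ‖x k‖ ^ 2) = (1 : ℝ) := by
      have heq : (fun k => ‖x k‖ ^ 2)
          = fun k => if k = j ∨ k = j + 1 then s ^ 2 else 0 := by
        funext k
        simp only [hxdef]
        split
        · rw [Complex.norm_real, Real.norm_eq_abs, sq_abs]
        · simp
      rw [heq, tsum_eq_sum (s := ({j, j + 1} : Finset ℕ)) (fun k hk => by
        rw [if_neg]
        simp only [Finset.mem_insert, Finset.mem_singleton, not_or] at hk
        tauto)]
      rw [Finset.sum_pair (Nat.lt_succ_self j).ne]
      rw [if_pos (Or.inl rfl), if_pos (Or.inr rfl), hs2]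
      norm_num
    have hzval : (∑' k, (if k = j then c else 0) * x k * (starRingEnd ℂ) (x (k + 1)))
        = c / 2 := by
      rw [tsum_eq_single j (fun k hk => by simp [hk])]
      have hxj : x j = (s : ℂ) := by simp [hxdef]
      have hxj1 : x (j + 1) = (s : ℂ) := by simp [hxdef]
      rw [if_pos rfl, hxj, hxj1, Complex.conj_ofReal]
      rw [mul_assoc, ← Complex.ofReal_mul, ← sq, hs2]
      push_cast
      ring
    have hmem : (c / 2 : ℂ) ∈ numRange (fun k => if k = j then c else 0) := ⟨x, hx1, hzval.symm⟩
    have := le_csSup (bddAbove_image_s12 ⟨‖c‖, hb⟩)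
      (Set.mem_image_of_mem (fun z : ℂ => ‖z‖) hmem)
    simpa [norm_div, numRad] using this

theorem stmt12 (d : ℕ → ℂ) (hd : IsBddSeq d) :
    IsLeast {c : ℝ | 0 ≤ c ∧ ∀ a : ℕ → ℂ, IsBddSeq a →
      numRad (fun k => d k * a k) ≤ c * numRad a} (supNorm d) := by
  constructor
  · exact ⟨supNorm_nonneg d, fun a ha => numRad_mul_le hd ha⟩
  · rintro c ⟨hc0, hc⟩
    refine Real.iSup_le (fun j => ?_) hc0
    have ha : IsBddSeq (fun k => if k = j then (1 : ℂ) else 0) :=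
      ⟨1, fun k => by by_cases hk : k = j <;> simp [hk]⟩
    have h := hc _ ha
    have heq : (fun k => d k * (if k = j then (1 : ℂ) else 0))
        = fun k => if k = j then d j else 0 := by
      funext k
      split
      · next hk => rw [hk, mul_one]
      · rw [mul_zero]
    rw [heq, numRad_single, numRad_single] at h
    simp only [norm_one] at h
    linarith
end

section
/- For every a ∈ ℓ^∞, w(T_{Ba}) ≤ w(T_a), where Ba = (a_2, a_3, ...) is the backward shift of a. -/
open Filter Finset Topology

lemma numRange_nonempty (a : ℕ → ℂ) : (numRange a).Nonempty := by
  refine ⟨0, fun k => if k = 0 then 1 else 0, ?_, ?_⟩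
  · rw [tsum_eq_single 0]
    · simp
    · intro k hk; simp [hk]
  · have h0 : ∀ k : ℕ, a k * (fun k : ℕ => if k = 0 then (1:ℂ) else 0) k *
        (starRingEnd ℂ) ((fun k : ℕ => if k = 0 then (1:ℂ) else 0) (k + 1)) = 0 := fun k => by simp
    symm
    rw [tsum_congr h0, tsum_zero]

lemma key_bound {a : ℕ → ℂ} {C : ℝ} (hC : ∀ k, ‖a k‖ ≤ C) (hC0 : 0 ≤ C)
    {x : ℕ → ℂ} (hx : (∑' k, ‖x k‖ ^ 2) = (1 : ℝ)) :
    ‖∑' k, a k * x k * (starRingEnd ℂ) (x (k + 1))‖ ≤ C := by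
  have hsum : Summable (fun k => ‖x k‖ ^ 2) := by
    by_contra h
    rw [tsum_eq_zero_of_not_summable h] at hx
    norm_num at hx
  have hsum1 : Summable (fun k => ‖x (k + 1)‖ ^ 2) := (summable_nat_add_iff (f := fun k => ‖x k‖ ^ 2) 1).2 hsum
  have hg : Summable (fun k => C * ((‖x k‖ ^ 2 + ‖x (k + 1)‖ ^ 2) / 2)) := by
    apply Summable.mul_left
    apply Summable.div_const
    exact hsum.add hsum1
  have hbd : ∀ k, ‖a k * x k * (starRingEnd ℂ) (x (k + 1))‖ ≤
      C * ((‖x k‖ ^ 2 + ‖x (k + 1)‖ ^ 2) / 2) := by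
    intro k
    rw [norm_mul, norm_mul, RingHomIsometric.norm_map]
    have h1 : ‖x k‖ * ‖x (k + 1)‖ ≤ (‖x k‖ ^ 2 + ‖x (k + 1)‖ ^ 2) / 2 := by
      nlinarith [sq_nonneg (‖x k‖ - ‖x (k + 1)‖)]
    have := hC k
    have := norm_nonneg (x k)
    have := norm_nonneg (x (k+1))
    have := norm_nonneg (a k)
    nlinarith
  calc ‖∑' k, a k * x k * (starRingEnd ℂ) (x (k + 1))‖
      ≤ ∑' k, C * ((‖x k‖ ^ 2 + ‖x (k + 1)‖ ^ 2) / 2) := tsum_of_norm_bounded hg.hasSum hbd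
    _ ≤ C := by
        rw [tsum_mul_left]
        have h2 : (∑' k, (‖x k‖ ^ 2 + ‖x (k + 1)‖ ^ 2) / 2) ≤ 1 := by
          rw [tsum_div_const, hsum.tsum_add hsum1, hx]
          have h3 : (∑' k, ‖x (k + 1)‖ ^ 2) ≤ 1 := by
            rw [← hx]
            apply hsum1.tsum_le_tsum_of_inj (fun n => n + 1) (add_left_injective 1)
            · intro c _; positivity
            · intro n; exact le_refl _
            · exact hsum
          linarith
        nlinarith

lemma numRange_bddAbove {a : ℕ → ℂ} (ha : IsBddSeq a) :
    BddAbove ((fun z : ℂ => ‖z‖) '' numRange a) := by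
  obtain ⟨C, hC⟩ := ha
  have hC' : ∀ k, ‖a k‖ ≤ max C 0 := fun k => le_max_of_le_left (hC k)
  refine ⟨max C 0, ?_⟩
  rintro r ⟨z, ⟨x, hx1, rfl⟩, rfl⟩
  exact key_bound hC' (le_max_right _ _) hx1

theorem stmt13 (a : ℕ → ℂ) (ha : IsBddSeq a) :
    numRad (fun k => a (k + 1)) ≤ numRad a := by
  apply csSup_le_csSup (numRange_bddAbove ha)
  · exact (numRange_nonempty _).image _
  · apply Set.image_mono
    rintro z ⟨x, hx1, rfl⟩
    refine ⟨fun k => if k = 0 then 0 else x (k - 1), ?_, ?_⟩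
    · have hsum : Summable (fun k => ‖x k‖ ^ 2) := by
        by_contra h
        rw [tsum_eq_zero_of_not_summable h] at hx1
        norm_num at hx1
      have heq : ∀ k : ℕ, ‖(fun k => if k = 0 then 0 else x (k - 1) : ℕ → ℂ) (k + 1)‖ ^ 2
          = ‖x k‖ ^ 2 := by intro k; simp
      have hsum2 : Summable (fun k => ‖(fun k => if k = 0 then 0 else x (k - 1) : ℕ → ℂ) k‖ ^ 2) := by
        rw [← summable_nat_add_iff 1]
        simpa [heq] using hsum
      rw [hsum2.tsum_eq_zero_add]
      simp only [heq]
      simpa using hx1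
    · have := Function.Injective.tsum_eq (f := fun k : ℕ =>
        a k * (if k = 0 then 0 else x (k - 1)) * (starRingEnd ℂ) (if k + 1 = 0 then (0:ℂ) else x (k + 1 - 1)))
        (g := fun n : ℕ => n + 1) (add_left_injective 1) ?_
      · rw [← this]
        simp
      · intro k hk
        simp only [Function.mem_support] at hk
        rcases Nat.eq_zero_or_pos k with h | h
        · subst h; simp at hk
        · exact ⟨k - 1, by simp; omega⟩
end
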